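/- In the single-individual setting with strict preferences: if P' ≠ P̄ is a monotonic transformation of P̄ at x_{N-1}, then x(P') is weakly P'-preferred to x_{N-1}. Likewise, if P' ≠ P̄ is a monotonic transformation of P̄ at x_N, then x(P') is weakly P'-preferred to x_N. -/

import Mathlib

/-!
Let `a` be `x_{N-1}` or `x_N` and suppose `a P' x(P')`. Then `a` cannot have improved its rank.
Since an outcome's rank plus the number of outcomes it beats is `N - 1`, a monotonic
transformation at `a` that does not improve `a` leaves `a` beating exactly the outcomes below it
in `P̄`, so `x(P')` lies below `a` in `P̄`. Below `x_N` there is nothing; below `x_{N-1}` there is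
only `x_N`, which is then `P'`-last and so has not improved either.
-/

/-- A strict linear order (strict total order) on `X`. -/
def SLO {X : Type} (P : X → X → Prop) : Prop :=
  (∀ x y : X, x ≠ y → P x y ∨ P y x) ∧ Transitive P ∧ Irreflexive P

/-- The reference ranking `P̄`: `x_1 P̄ x_2 P̄ … P̄ x_N` (0-indexed: smaller index preferred). -/
def Pbar {N : ℕ} : Fin N → Fin N → Prop := fun a b => a < b

/-- The rank of `x` under `P`: the number of outcomes strictly preferred to `x`. -/
noncomputable def rankOf {N : ℕ} (P : Fin N → Fin N → Prop) (x : Fin N) : ℕ :=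
  Nat.card {y : Fin N // P y x}

/-- `x` strictly improves its rank under `P` relative to `P̄`. -/
def improves {N : ℕ} (P : Fin N → Fin N → Prop) (x : Fin N) : Prop :=
  rankOf P x < rankOf (Pbar (N := N)) x

/-- `z` is `x(P)`: the `P`-most-preferred outcome among those whose rank improved. -/
def topImproved {N : ℕ} (P : Fin N → Fin N → Prop) (z : Fin N) : Prop :=
  improves P z ∧ ∀ w : Fin N, improves P w → ¬ P w z

theorem SLO.rel_of_not_rel {X : Type} {P : X → X → Prop} (hP : SLO P) {x y : X}
    (hxy : x ≠ y) (h : ¬ P y x) : P x y :=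
  (hP.1 x y hxy).resolve_right h

theorem SLO.asymm {X : Type} {P : X → X → Prop} (hP : SLO P) {x y : X}
    (h : P x y) : ¬ P y x :=
  fun h' => hP.2.2 x (hP.2.1 h h')

theorem slo_Pbar {N : ℕ} : SLO (Pbar (N := N)) :=
  ⟨fun _ _ h => lt_or_gt_of_ne h, fun _ _ _ => lt_trans, lt_irrefl⟩

theorem rankOf_add_ncard {N : ℕ} {P : Fin N → Fin N → Prop} (hP : SLO P) (x : Fin N) :
    rankOf P x + {y | P x y}.ncard = N - 1 := by
  have hunion : {y | P y x} ∪ {y | P x y} = Set.univ \ {x} := by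
    ext y
    simp only [Set.mem_union, Set.mem_ofPred_eq, Set.mem_sdiff, Set.mem_univ,
      Set.mem_singleton_iff, true_and]
    constructor
    · rintro (h | h) rfl <;> exact hP.2.2 _ h
    · exact fun hyx => hP.1 y x hyx
  have hdisj : Disjoint {y | P y x} {y | P x y} :=
    Set.disjoint_left.mpr fun _ hyx hxy => hP.asymm hyx hxy
  change {y | P y x}.ncard + _ = _
  rw [← Set.ncard_union_eq hdisj, hunion,
    Set.ncard_sdiff_singleton_of_mem (Set.mem_univ x), Set.ncard_univ, Nat.card_fin]

theorem improves_iff {N : ℕ} {P : Fin N → Fin N → Prop} (hP : SLO P) (x : Fin N) :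
    improves P x ↔ {y | Pbar x y}.ncard < {y | P x y}.ncard := by
  have h := rankOf_add_ncard hP x
  have hbar := rankOf_add_ncard slo_Pbar x
  unfold improves
  omega

theorem not_improves_of_forall_not_rel {N : ℕ} {P : Fin N → Fin N → Prop} (hP : SLO P)
    {z : Fin N} (hz : ∀ y, ¬ P z y) : ¬ improves P z := by
  have hempty : {y | P z y} = ∅ := Set.eq_empty_of_forall_notMem hz
  rw [improves_iff hP, hempty, Set.ncard_empty]
  exact Nat.not_lt_zero _

theorem rel_iff_Pbar_of_not_improves {N : ℕ} {P : Fin N → Fin N → Prop} (hP : SLO P)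
    {a : Fin N} (hmono : ∀ y, Pbar a y → P a y) (ha : ¬ improves P a) (y : Fin N) :
    P a y ↔ Pbar a y := by
  rw [improves_iff hP, not_lt] at ha
  have hset : {y | Pbar a y} = {y | P a y} := Set.eq_of_subset_of_ncard_le hmono ha
  exact (Set.ext_iff.mp hset y).symm

theorem lt_of_topImproved {N : ℕ} {P : Fin N → Fin N → Prop} (hP : SLO P) {a z : Fin N}
    (hmono : ∀ y, Pbar a y → P a y) (hz : topImproved P z) (haz : P a z) : a < z :=
  (rel_iff_Pbar_of_not_improves hP hmono (hz.2 a · haz) z).mp haz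

theorem rel_of_lt_of_not_improves {N : ℕ} {P : Fin N → Fin N → Prop} (hP : SLO P)
    {a : Fin N} (hmono : ∀ y, Pbar a y → P a y) (ha : ¬ improves P a) {y : Fin N}
    (hy : y < a) : P y a :=
  hP.rel_of_not_rel hy.ne fun hay =>
    lt_asymm hy ((rel_iff_Pbar_of_not_improves hP hmono ha y).mp hay)

/-- if `P' ≠ P̄` is a monotonic transformation of `P̄` at `x_{N-1}`
(resp. at `x_N`), then `x(P')` is weakly `P'`-preferred to `x_{N-1}` (resp. `x_N`). -/
theorem stmt11 {N : ℕ} (hN : 3 ≤ N) (P' : Fin N → Fin N → Prop) (hP' : SLO P')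
    (z : Fin N) (hz : topImproved P' z) :
    ((∀ y : Fin N, Pbar (⟨N - 2, by omega⟩ : Fin N) y → P' (⟨N - 2, by omega⟩ : Fin N) y) →
      (z = (⟨N - 2, by omega⟩ : Fin N) ∨ P' z (⟨N - 2, by omega⟩ : Fin N))) ∧
    ((∀ y : Fin N, Pbar (⟨N - 1, by omega⟩ : Fin N) y → P' (⟨N - 1, by omega⟩ : Fin N) y) →
      (z = (⟨N - 1, by omega⟩ : Fin N) ∨ P' z (⟨N - 1, by omega⟩ : Fin N))) := by
  set a₂ : Fin N := ⟨N - 2, by omega⟩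
  set a₁ : Fin N := ⟨N - 1, by omega⟩
  have ha₂ : a₂.val = N - 2 := rfl
  have ha₁ : a₁.val = N - 1 := rfl
  refine ⟨fun hmono => ?_, fun hmono => ?_⟩
  · by_contra! hzne
    have haz : P' a₂ z := hP'.rel_of_not_rel (Ne.symm hzne.1) hzne.2
    have ha : ¬ improves P' a₂ := (hz.2 a₂ · haz)
    have hz_last : z.val = N - 1 := by
      have hlt := lt_of_topImproved hP' hmono hz haz
      rw [Fin.lt_def] at hlt
      omega
    -- every outcome other than `z` beats `x_{N-1}`, which beats `z`; so `z` is `P'`-last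
    refine not_improves_of_forall_not_rel hP' (fun y hzy => ?_) hz.1
    have hy : y < a₂ := by
      have hyz : y ≠ z := fun h => hP'.2.2 z (h ▸ hzy)
      have hya : y ≠ a₂ := fun h => hP'.asymm haz (h ▸ hzy)
      rw [Ne, Fin.ext_iff] at hyz hya
      rw [Fin.lt_def]
      omega
    exact hP'.asymm hzy (hP'.2.1 (rel_of_lt_of_not_improves hP' hmono ha hy) haz)
  · by_contra! hzne
    have hlt := lt_of_topImproved hP' hmono hz (hP'.rel_of_not_rel (Ne.symm hzne.1) hzne.2)
    rw [Fin.lt_def] at hlt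
    omega
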